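/- arXiv:1706.02045 — 3 statements merged into one kernel-verified Lean document; each statement's English description precedes it below -/
import Mathlib

section
/- Let f : ℝ → ℝ be absolutely continuous and periodic with period P > 0, with (almost-everywhere) derivative f' square-integrable on [0,P]. If ∫₀^P f(x) dx = 0, then the supremum norm of f satisfies ‖f‖_∞² ≤ (P/(2π)) ∫₀^P f'(x)² dx, where ‖f‖_∞ = sup_{x ∈ [0,P]} |f(x)|. -/
/-!
Let `m` maximise `|f|` on `[0, P]` and let `k` be the sawtooth kernel, equal to `x - m + P/2`
on `[0, m]` and to `x - m - P/2` on `[m, P]`. Integrating by parts on both pieces gives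
`∫₀^P k f' = P f(m)`: the jump of `k` at `m` produces `P f(m)`, the boundary terms at `0` and `P`
cancel by periodicity, and `∫ f = 0` removes the remaining term. As `∫₀^P k² = P³/12`,
Cauchy–Schwarz gives `f(m)² ≤ (P/12) ∫₀^P f'²`, which is stronger than the claim since `2π ≤ 12`.
-/

open MeasureTheory intervalIntegral Set

theorem sq_integral_mul_le_integral_sq_mul_integral_sq {α : Type*} [MeasurableSpace α]
    {μ : Measure α} {g h : α → ℝ} (hg : Integrable (fun x => g x ^ 2) μ)
    (hh : Integrable (fun x => h x ^ 2) μ) (hgh : Integrable (fun x => g x * h x) μ) :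
    (∫ x, g x * h x ∂μ) ^ 2 ≤ (∫ x, g x ^ 2 ∂μ) * ∫ x, h x ^ 2 ∂μ := by
  have hquad : ∀ s : ℝ, 0 ≤ (∫ x, g x ^ 2 ∂μ) * (s * s) + (2 * ∫ x, g x * h x ∂μ) * s
      + ∫ x, h x ^ 2 ∂μ := by
    intro s
    have hexpand : ∫ x, (s * g x + h x) ^ 2 ∂μ = (∫ x, g x ^ 2 ∂μ) * (s * s)
        + (2 * ∫ x, g x * h x ∂μ) * s + ∫ x, h x ^ 2 ∂μ := by
      have hpt : (fun x => (s * g x + h x) ^ 2)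
          = fun x => (s * s) * g x ^ 2 + (2 * s) * (g x * h x) + h x ^ 2 := by
        funext x; ring
      have hsum : Integrable (fun x => s * s * g x ^ 2 + 2 * s * (g x * h x)) μ :=
        (hg.const_mul _).add (hgh.const_mul _)
      rw [hpt, integral_add hsum hh,
        integral_add (hg.const_mul _) (hgh.const_mul _), MeasureTheory.integral_const_mul,
        MeasureTheory.integral_const_mul]
      ring
    exact hexpand ▸ integral_nonneg fun x => sq_nonneg _
  have := discrim_le_zero hquad
  rw [discrim] at this
  nlinarith

theorem sq_intervalIntegral_mul_le {g h : ℝ → ℝ} {a b : ℝ}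
    (hg : IntervalIntegrable (fun x => g x ^ 2) volume a b)
    (hh : IntervalIntegrable (fun x => h x ^ 2) volume a b)
    (hgh : IntervalIntegrable (fun x => g x * h x) volume a b) :
    (∫ x in a..b, g x * h x) ^ 2 ≤ (∫ x in a..b, g x ^ 2) * ∫ x in a..b, h x ^ 2 := by
  rcases le_total a b with hab | hba
  · simp only [integral_of_le hab]
    exact sq_integral_mul_le_integral_sq_mul_integral_sq hg.1 hh.1 hgh.1
  · simp only [integral_symm b a, integral_of_le hba, neg_sq, neg_mul_neg]
    exact sq_integral_mul_le_integral_sq_mul_integral_sq hg.2 hh.2 hgh.2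

theorem add_sq_le_of_sq_le_mul {A B a b α β : ℝ} (ha : 0 ≤ a) (hb : 0 ≤ b) (hα : 0 ≤ α)
    (hβ : 0 ≤ β) (hA : A ^ 2 ≤ a * α) (hB : B ^ 2 ≤ b * β) :
    (A + B) ^ 2 ≤ (a + b) * (α + β) := by
  have hAB : (2 * A * B) ^ 2 ≤ (a * β + b * α) ^ 2 := by
    nlinarith [mul_le_mul hA hB (sq_nonneg B) (by positivity), sq_nonneg (a * β - b * α)]
  nlinarith [(abs_le_of_sq_le_sq' hAB (by positivity)).2]

theorem integral_sub_sq (a b c : ℝ) :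
    ∫ x in a..b, (x - c) ^ 2 = ((b - c) ^ 3 - (a - c) ^ 3) / 3 := by
  simp [intervalIntegral.integral_comp_sub_right (fun x => x ^ 2)]
  norm_num

section PrimitiveOfIntegrable

variable {f f' : ℝ → ℝ} {a b : ℝ}

theorem absolutelyContinuousOnInterval_of_sub_eq_integral
    (hint : IntervalIntegrable f' volume a b) (hFTC : ∀ x, f x - f a = ∫ t in a..x, f' t) :
    AbsolutelyContinuousOnInterval f a b := by
  have hf : f = fun x => f a + ∫ t in a..x, f' t := funext fun x => by linarith [hFTC x]
  rw [hf]
  exact contDiffOn_const.absolutelyContinuousOnInterval.add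
    (hint.absolutelyContinuousOnInterval_intervalIntegral left_mem_uIcc)

theorem ae_hasDerivAt_of_sub_eq_integral
    (hint : IntervalIntegrable f' volume a b) (hFTC : ∀ x, f x - f a = ∫ t in a..x, f' t) :
    ∀ᵐ x, x ∈ uIcc a b → HasDerivAt f (f' x) x := by
  have hf : f = fun x => f a + ∫ t in a..x, f' t := funext fun x => by linarith [hFTC x]
  filter_upwards [hint.ae_hasDerivAt_integral] with x hx hxab
  rw [hf]
  exact (hx hxab a left_mem_uIcc).const_add _

theorem integral_mul_eq_sub_integral_deriv_mul_of_sub_eq_integral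
    (hint : IntervalIntegrable f' volume a b) (hFTC : ∀ x, f x - f a = ∫ t in a..x, f' t)
    {w : ℝ → ℝ} (hw : ContDiff ℝ 1 w) :
    ∫ x in a..b, w x * f' x = w b * f b - w a * f a - ∫ x in a..b, deriv w x * f x := by
  rw [← (hw.contDiffOn.absolutelyContinuousOnInterval).integral_mul_deriv_eq_deriv_mul
    (absolutelyContinuousOnInterval_of_sub_eq_integral hint hFTC)]
  refine integral_congr_ae ?_
  filter_upwards [ae_hasDerivAt_of_sub_eq_integral hint hFTC] with x hx hxab
  rw [(hx (uIoc_subset_uIcc hxab)).deriv]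

theorem integral_sub_mul_eq_of_sub_eq_integral
    (hint : IntervalIntegrable f' volume a b) (hFTC : ∀ x, f x - f a = ∫ t in a..x, f' t)
    (c : ℝ) :
    ∫ x in a..b, (x - c) * f' x = (b - c) * f b - (a - c) * f a - ∫ x in a..b, f x := by
  simpa using integral_mul_eq_sub_integral_deriv_mul_of_sub_eq_integral hint hFTC
    (contDiff_id.sub contDiff_const : ContDiff ℝ 1 fun x : ℝ => x - c)

end PrimitiveOfIntegrable

theorem sq_le_div_twelve_mul_integral_sq_of_integral_eq_zero {f f' : ℝ → ℝ} {P m : ℝ}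
    (hP : 0 < P) (hm : m ∈ Icc 0 P) (hint : IntervalIntegrable f' volume 0 P)
    (hFTC : ∀ x y, f y - f x = ∫ t in x..y, f' t)
    (hL2 : IntervalIntegrable (fun x => f' x ^ 2) volume 0 P)
    (hper : f P = f 0) (hmean : ∫ x in (0:ℝ)..P, f x = 0) :
    f m ^ 2 ≤ P / 12 * ∫ x in (0:ℝ)..P, f' x ^ 2 := by
  have hm' : m ∈ uIcc 0 P := by rwa [uIcc_of_le hP.le]
  have h0m : uIcc 0 m ⊆ uIcc 0 P := uIcc_subset_uIcc left_mem_uIcc hm'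
  have hmP : uIcc m P ⊆ uIcc 0 P := uIcc_subset_uIcc hm' right_mem_uIcc
  have hf_int : IntervalIntegrable f volume 0 P :=
    (absolutelyContinuousOnInterval_of_sub_eq_integral hint (hFTC 0)).continuousOn
      |>.intervalIntegrable
  set A := ∫ x in (0:ℝ)..m, (x - (m - P / 2)) * f' x
  set B := ∫ x in m..P, (x - (m + P / 2)) * f' x
  have hAB : A + B = P * f m := by
    have hA := integral_sub_mul_eq_of_sub_eq_integral (hint.mono_set h0m) (hFTC 0) (m - P / 2)
    have hB := integral_sub_mul_eq_of_sub_eq_integral (hint.mono_set hmP) (hFTC m) (m + P / 2)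
    have hsplit := integral_add_adjacent_intervals (hf_int.mono_set h0m) (hf_int.mono_set hmP)
    linear_combination hA + hB + (P / 2 - m) * hper - hsplit - hmean
  have hA : A ^ 2 ≤ (∫ x in (0:ℝ)..m, (x - (m - P / 2)) ^ 2) * ∫ x in (0:ℝ)..m, f' x ^ 2 :=
    sq_intervalIntegral_mul_le (Continuous.intervalIntegrable (by fun_prop) _ _)
      (hL2.mono_set h0m)
      ((hint.mono_set h0m).continuousOn_mul (by fun_prop))
  have hB : B ^ 2 ≤ (∫ x in m..P, (x - (m + P / 2)) ^ 2) * ∫ x in m..P, f' x ^ 2 :=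
    sq_intervalIntegral_mul_le (Continuous.intervalIntegrable (by fun_prop) _ _)
      (hL2.mono_set hmP)
      ((hint.mono_set hmP).continuousOn_mul (by fun_prop))
  have hweights : (∫ x in (0:ℝ)..m, (x - (m - P / 2)) ^ 2) + ∫ x in m..P, (x - (m + P / 2)) ^ 2
      = P ^ 3 / 12 := by
    rw [integral_sub_sq, integral_sub_sq]
    ring
  have hderiv := integral_add_adjacent_intervals (hL2.mono_set h0m) (hL2.mono_set hmP)
  have hsq := add_sq_le_of_sq_le_mul
    (integral_nonneg hm.1 fun x _ => sq_nonneg _) (integral_nonneg hm.2 fun x _ => sq_nonneg _)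
    (integral_nonneg hm.1 fun x _ => sq_nonneg _) (integral_nonneg hm.2 fun x _ => sq_nonneg _)
    hA hB
  rw [hAB, hweights, hderiv] at hsq
  have hP2 : 0 < P ^ 2 := by positivity
  nlinarith

/-- **Sup-norm estimate for zero-mean periodic functions** (Appendix Lemma A.2).
For an absolutely continuous `P`-periodic `f` with square-integrable a.e.
derivative `f'` and `∫₀^P f = 0`, one has
`‖f‖_∞² ≤ (P/(2π)) ∫₀^P f'²`, where `‖f‖_∞ = sup_{x ∈ [0,P]} |f x|`. -/
theorem sup_norm_sq_le_of_zero_mean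
    (f f' : ℝ → ℝ) (P : ℝ) (hP : 0 < P)
    (hper : Function.Periodic f P)
    (hint : ∀ a b : ℝ, IntervalIntegrable f' volume a b)
    (hFTC : ∀ a b : ℝ, f b - f a = ∫ t in a..b, f' t)
    (hL2 : IntegrableOn (fun x => (f' x) ^ 2) (Set.Icc 0 P) volume)
    (hmean : (∫ x in (0:ℝ)..P, f x) = 0) :
    (⨆ x ∈ Set.Icc (0:ℝ) P, |f x|) ^ 2 ≤
      (P / (2 * Real.pi)) * ∫ x in (0:ℝ)..P, (f' x) ^ 2 := by
  have hcont : ContinuousOn f (Icc 0 P) := by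
    simpa [uIcc_of_le hP.le] using
      (absolutelyContinuousOnInterval_of_sub_eq_integral (hint 0 P) (hFTC 0)).continuousOn
  obtain ⟨m, hm, hmax⟩ := isCompact_Icc.exists_isMaxOn (nonempty_Icc.mpr hP.le) hcont.abs
  have hsup : (⨆ x ∈ Icc (0:ℝ) P, |f x|) ≤ |f m| :=
    Real.iSup_le (fun x => Real.iSup_le (fun hx => hmax hx) (abs_nonneg _)) (abs_nonneg _)
  have hsup_nonneg : 0 ≤ ⨆ x ∈ Icc (0:ℝ) P, |f x| :=
    Real.iSup_nonneg fun x => Real.iSup_nonneg fun _ => abs_nonneg _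
  have hbound := sq_le_div_twelve_mul_integral_sq_of_integral_eq_zero hP hm (hint 0 P) hFTC
    ((intervalIntegrable_iff_integrableOn_Icc_of_le hP.le).mpr hL2)
    (by simpa using hper 0) hmean
  have hderiv_nonneg : 0 ≤ ∫ x in (0:ℝ)..P, f' x ^ 2 :=
    integral_nonneg hP.le fun x _ => sq_nonneg _
  have htwelve : P / 12 ≤ P / (2 * Real.pi) :=
    div_le_div_of_nonneg_left hP.le Real.two_pi_pos (by linarith [Real.pi_le_four])
  calc (⨆ x ∈ Icc (0:ℝ) P, |f x|) ^ 2 ≤ |f m| ^ 2 := pow_le_pow_left₀ hsup_nonneg hsup 2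
    _ = f m ^ 2 := sq_abs _
    _ ≤ P / 12 * ∫ x in (0:ℝ)..P, f' x ^ 2 := hbound
    _ ≤ P / (2 * Real.pi) * ∫ x in (0:ℝ)..P, f' x ^ 2 :=
      mul_le_mul_of_nonneg_right htwelve hderiv_nonneg
end

section
/- Let f : ℝ → ℝ be a smooth function that is periodic with period L > 0, and write f̄ = (1/L)∫₀^L f(x) dx for its mean and f^{(j)} for its j-th derivative. Then for every m ∈ ℕ with m ≥ 1 and every ε > 0, ∫₀^L (f^{(m)}(x))² dx ≤ ε·L²·∫₀^L (f^{(m+1)}(x))² dx + (1/(4·ε^m))·L^{-2m}·∫₀^L (f(x) − f̄)² dx. -/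
open MeasureTheory intervalIntegral
open scoped ContDiff

private lemma periodic_deriv' {g : ℝ → ℝ} {L : ℝ} (hp : Function.Periodic g L) :
    Function.Periodic (deriv g) L := fun x => by
  have : deriv (fun y => g (y + L)) x = deriv g (x + L) := deriv_comp_add_const g L x
  rw [← this]
  congr 1
  funext y
  exact hp y

private lemma periodic_iteratedDeriv {g : ℝ → ℝ} {L : ℝ} (hp : Function.Periodic g L) (n : ℕ) :
    Function.Periodic (iteratedDeriv n g) L := by
  induction n with
  | zero => simpa using hp
  | succ k ih => rw [iteratedDeriv_succ]; exact periodic_deriv' ih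

private lemma contDiff_iteratedDeriv {g : ℝ → ℝ} (hg : ContDiff ℝ (⊤ : ℕ∞) g) (n : ℕ) :
    ContDiff ℝ ∞ (iteratedDeriv n g) := by
  rw [iteratedDeriv_eq_iterate]
  exact (hg.of_le (by simp)).iterate_deriv n

/-- Key step: integration by parts plus pointwise Young's inequality. -/
private lemma key (g : ℝ → ℝ) (L : ℝ) (hL : 0 < L) (hg : ContDiff ℝ (⊤ : ℕ∞) g)
    (hp : Function.Periodic g L) (j : ℕ) (a : ℝ) (ha : 0 < a) :
    (∫ x in (0:ℝ)..L, (iteratedDeriv (j+1) g x) ^ 2) ≤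
      a * (∫ x in (0:ℝ)..L, (iteratedDeriv (j+2) g x) ^ 2) +
        (1 / (4 * a)) * ∫ x in (0:ℝ)..L, (iteratedDeriv j g x) ^ 2 := by
  set u := iteratedDeriv j g with hu
  set w := iteratedDeriv (j+1) g with hw
  set z := iteratedDeriv (j+2) g with hz
  have cu : Continuous u := (contDiff_iteratedDeriv hg j).continuous
  have cw : Continuous w := (contDiff_iteratedDeriv hg (j+1)).continuous
  have cz : Continuous z := (contDiff_iteratedDeriv hg (j+2)).continuous
  -- derivatives
  have hdu : ∀ x : ℝ, HasDerivAt u (w x) x := by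
    intro x
    have : DifferentiableAt ℝ u x :=
      ((contDiff_iteratedDeriv hg j).differentiable (by simp)).differentiableAt
    have h := this.hasDerivAt
    rwa [show deriv u x = w x from by rw [hw, iteratedDeriv_succ]] at h
  have hdw : ∀ x : ℝ, HasDerivAt w (z x) x := by
    intro x
    have : DifferentiableAt ℝ w x :=
      ((contDiff_iteratedDeriv hg (j+1)).differentiable (by simp)).differentiableAt
    have h := this.hasDerivAt
    rwa [show deriv w x = z x from by rw [hz, iteratedDeriv_succ]] at h
  -- integration by parts
  have hibp : ∫ x in (0:ℝ)..L, (w x * w x + u x * z x) = u L * w L - u 0 * w 0 :=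
    integral_deriv_mul_eq_sub (fun x _ => hdu x) (fun x _ => hdw x)
      (cw.intervalIntegrable 0 L) (cz.intervalIntegrable 0 L)
  have hpu : u L = u 0 := by
    simpa using periodic_iteratedDeriv hp j 0
  have hpw : w L = w 0 := by
    simpa using periodic_iteratedDeriv hp (j+1) 0
  have hsplit : (∫ x in (0:ℝ)..L, w x * w x) + ∫ x in (0:ℝ)..L, u x * z x = 0 := by
    rw [← intervalIntegral.integral_add (f := fun x => w x * w x) (g := fun x => u x * z x) ((cw.mul cw).intervalIntegrable 0 L)
      ((cu.mul cz).intervalIntegrable 0 L), hibp, hpu, hpw]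
    ring
  have heq : (∫ x in (0:ℝ)..L, (w x) ^ 2) = ∫ x in (0:ℝ)..L, -(u x * z x) := by
    rw [intervalIntegral.integral_neg]
    simp only [sq]
    linarith
  rw [heq]
  have hpt : ∀ x ∈ Set.Icc (0:ℝ) L, -(u x * z x) ≤ a * (z x)^2 + (1/(4*a)) * (u x)^2 := by
    intro x _
    have h4 : (0:ℝ) < 4 * a := by linarith
    have hid : a * (z x)^2 + 1/(4*a) * (u x)^2 + (u x * z x) = (2*a*z x + u x)^2 / (4*a) := by
      field_simp
      ring
    have hnn : 0 ≤ (2*a*z x + u x)^2 / (4*a) := div_nonneg (sq_nonneg _) h4.le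
    linarith
  calc (∫ x in (0:ℝ)..L, -(u x * z x))
      ≤ ∫ x in (0:ℝ)..L, (a * (z x)^2 + (1/(4*a)) * (u x)^2) := by
        apply intervalIntegral.integral_mono_on hL.le
        · exact ((cu.mul cz).neg).intervalIntegrable 0 L
        · exact (((continuous_const.mul (cz.pow 2))).add
            ((continuous_const.mul (cu.pow 2)))).intervalIntegrable 0 L
        · exact hpt
    _ = a * (∫ x in (0:ℝ)..L, (z x) ^ 2) + (1/(4*a)) * ∫ x in (0:ℝ)..L, (u x) ^ 2 := by
        rw [intervalIntegral.integral_add (f := fun x => a * z x ^ 2) (g := fun x => 1/(4*a) * u x ^ 2) ((continuous_const.mul (cz.pow 2)).intervalIntegrable 0 L)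
          ((continuous_const.mul (cu.pow 2)).intervalIntegrable 0 L),
          intervalIntegral.integral_const_mul, intervalIntegral.integral_const_mul]

/-- **ε-interpolation inequality** (Appendix Lemma A.0). For a smooth
`L`-periodic function `f` with mean `f̄`, every `m ≥ 1` and every `ε > 0`:
`∫₀^L (f^{(m)})² ≤ ε L² ∫₀^L (f^{(m+1)})² + (1/(4εᵐ)) L^{-2m} ∫₀^L (f − f̄)²`. -/
theorem eps_interpolation
    (f : ℝ → ℝ) (L : ℝ) (hL : 0 < L)
    (hf : ContDiff ℝ (⊤ : ℕ∞) f) (hper : Function.Periodic f L)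
    (m : ℕ) (hm : 1 ≤ m) (ε : ℝ) (hε : 0 < ε) :
    (∫ x in (0:ℝ)..L, (iteratedDeriv m f x) ^ 2) ≤
      ε * L ^ 2 * (∫ x in (0:ℝ)..L, (iteratedDeriv (m + 1) f x) ^ 2) +
        (1 / (4 * ε ^ m)) * (L ^ (2 * m))⁻¹ *
          ∫ x in (0:ℝ)..L, (f x - (1 / L) * ∫ y in (0:ℝ)..L, f y) ^ 2 := by
  set c : ℝ := (1 / L) * ∫ y in (0:ℝ)..L, f y with hc
  set g : ℝ → ℝ := fun x => f x - c with hgdef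
  have hg : ContDiff ℝ (⊤ : ℕ∞) g := hf.sub contDiff_const
  have hpg : Function.Periodic g L := fun x => by simp [hgdef, hper x]
  -- iterated derivatives of g and f agree for j ≥ 1
  have hder : ∀ j : ℕ, iteratedDeriv (j + 1) g = iteratedDeriv (j + 1) f := by
    intro j
    have hd : deriv g = deriv f := by
      funext x
      simpa [hgdef] using deriv_sub_const (f := f) (x := x) c
    rw [iteratedDeriv_succ', iteratedDeriv_succ', hd]
  have hgzero : iteratedDeriv 0 g = g := iteratedDeriv_zero
  -- main induction
  have main : ∀ n : ℕ, 1 ≤ n →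
      (∫ x in (0:ℝ)..L, (iteratedDeriv n g x) ^ 2) ≤
        ε * L ^ 2 * (∫ x in (0:ℝ)..L, (iteratedDeriv (n + 1) g x) ^ 2) +
          (1 / (4 * ε ^ n)) * (L ^ (2 * n))⁻¹ * ∫ x in (0:ℝ)..L, (g x) ^ 2 := by
    intro n hn
    induction n, hn using Nat.le_induction with
    | base =>
      have h := key g L hL hg hpg 0 (ε * L ^ 2) (by positivity)
      rw [hgzero] at h
      have : (1 / (4 * (ε * L ^ 2))) = (1 / (4 * ε ^ 1)) * (L ^ (2 * 1))⁻¹ := by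
        field_simp
      rw [this] at h
      simpa using h
    | succ n hn ih =>
      have h1 := key g L hL hg hpg n (ε * L ^ 2 / 2) (by positivity)
      have hp : (0:ℝ) < ε * L ^ 2 := by positivity
      -- from h1 and ih derive the result
      have hc1 : (1 / (4 * (ε * L ^ 2 / 2))) = 1 / (2 * (ε * L ^ 2)) := by ring_nf
      rw [hc1] at h1
      set A := ∫ x in (0:ℝ)..L, (iteratedDeriv (n + 1 + 1) g x) ^ 2
      set B := ∫ x in (0:ℝ)..L, (iteratedDeriv (n + 1) g x) ^ 2
      set C := ∫ x in (0:ℝ)..L, (iteratedDeriv n g x) ^ 2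
      set D := ∫ x in (0:ℝ)..L, (g x) ^ 2
      -- h1 : B ≤ ε L²/2 * A + 1/(2εL²) * C
      -- ih : C ≤ ε L² * B + 1/(4ε^n) L^{-2n} D
      have step : B ≤ ε * L ^ 2 * A +
          (1 / (ε * L ^ 2)) * ((1 / (4 * ε ^ n)) * (L ^ (2 * n))⁻¹ * D) := by
        have h2 : (1 / (2 * (ε * L ^ 2))) * C ≤
            (1 / (2 * (ε * L ^ 2))) * (ε * L ^ 2 * B + (1 / (4 * ε ^ n)) * (L ^ (2 * n))⁻¹ * D) :=
          mul_le_mul_of_nonneg_left ih (by positivity)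
        have h4 : (1 / (2 * (ε * L ^ 2))) *
            (ε * L ^ 2 * B + (1 / (4 * ε ^ n)) * (L ^ (2 * n))⁻¹ * D) =
            B / 2 + (1 / (2 * (ε * L ^ 2))) * ((1 / (4 * ε ^ n)) * (L ^ (2 * n))⁻¹ * D) := by
          field_simp
        have h5 : (1 / (ε * L ^ 2)) * ((1 / (4 * ε ^ n)) * (L ^ (2 * n))⁻¹ * D) =
            2 * ((1 / (2 * (ε * L ^ 2))) * ((1 / (4 * ε ^ n)) * (L ^ (2 * n))⁻¹ * D)) := by
          field_simp
        linarith [h1, h2]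
      have hcoef : (1 / (ε * L ^ 2)) * ((1 / (4 * ε ^ n)) * (L ^ (2 * n))⁻¹) =
          (1 / (4 * ε ^ (n + 1))) * (L ^ (2 * (n + 1)))⁻¹ := by
        rw [pow_succ, Nat.mul_succ, pow_add]
        field_simp
        ring
      calc B ≤ ε * L ^ 2 * A + (1 / (ε * L ^ 2)) * ((1 / (4 * ε ^ n)) * (L ^ (2 * n))⁻¹) * D := by
            linarith [step]
        _ = ε * L ^ 2 * A + (1 / (4 * ε ^ (n + 1))) * (L ^ (2 * (n + 1)))⁻¹ * D := by
            rw [hcoef]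
  have h := main m hm
  -- rewrite iteratedDeriv g to iteratedDeriv f
  obtain ⟨k, rfl⟩ := Nat.exists_eq_add_of_le hm
  have e1 : iteratedDeriv (1 + k) g = iteratedDeriv (1 + k) f := by
    have := hder k
    rwa [add_comm] at this
  have e2 : iteratedDeriv (1 + k + 1) g = iteratedDeriv (1 + k + 1) f := by
    have := hder (k + 1)
    rwa [show k + 1 + 1 = 1 + k + 1 by ring] at this
  rw [e1, e2] at h
  simpa [hgdef, hc] using h
end

section
/- For all K, μ, ν ∈ ℕ with K ≥ 1 and ν ≥ 2 there is a constant c = c(K, μ, ν) > 0 with the following property. Let φ : ℝ → ℝ be a smooth function periodic with period L > 0, let i₁, …, i_ν be nonnegative integers with i₁ + ⋯ + i_ν = μ and i_j ≤ K − 1 for each j, and set η = (μ + ν/2 − 1)/K. Then ∫₀^L |φ^{(i₁)}(x) ⋯ φ^{(i_ν)}(x)| dx ≤ c · L^{1−μ−ν} · (L·∫₀^L φ² dx)^{(ν−η)/2} · (L^{2K+1}·∫₀^L (φ^{(K)})² dx + L·∫₀^L φ² dx)^{η/2}. -/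
open MeasureTheory intervalIntegral

/-- iterated product rule helper: derivative of a periodic function is periodic. -/
private lemma periodic_deriv'' {f : ℝ → ℝ} {L : ℝ} (h : Function.Periodic f L) :
    Function.Periodic (deriv f) L := fun x => by
  have h1 : (fun y => f (y + L)) = f := funext h
  calc deriv f (x + L) = deriv (fun y => f (y + L)) x := (deriv_comp_add_const f L x).symm
    _ = deriv f x := by rw [h1]

private lemma periodic_iter {φ : ℝ → ℝ} {L : ℝ} (h : Function.Periodic φ L) :
    ∀ n, Function.Periodic (iteratedDeriv n φ) L
  | 0 => by simpa [iteratedDeriv_zero] using h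
  | n+1 => by rw [iteratedDeriv_succ]; exact periodic_deriv'' (periodic_iter h n)

private lemma smooth_iter {φ : ℝ → ℝ} (h : ContDiff ℝ (⊤ : ℕ∞) φ) (n : ℕ) :
    ContDiff ℝ (⊤ : ℕ∞) (iteratedDeriv n φ) := by
  rw [iteratedDeriv_eq_iterate]
  exact ContDiff.iterate_deriv n (h.of_le (by simp))

private lemma rpow_fin_sum {x : ℝ} (hx : 0 < x) {n : ℕ} (f : Fin n → ℝ) :
    x ^ (∑ j, f j) = ∏ j, x ^ f j := by
  induction n with
  | zero => simp
  | succ n ih => rw [Fin.sum_univ_succ, Fin.prod_univ_succ, Real.rpow_add hx, ih]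
private lemma ratio_step {c : ℕ → ℝ} (hpos : ∀ i, 0 ≤ c i)
    (hlc : ∀ i, c (i+1)^2 ≤ c i * c (i+2)) :
    ∀ p q, p ≤ q → c (p+1) * c q ≤ c p * c (q+1) := by
  intro p q hpq
  induction q, hpq using Nat.le_induction with
  | base => exact (mul_comm _ _).le
  | succ q hq ih =>
    by_cases hz : c (q+1) = 0
    · rw [hz, mul_zero]; exact mul_nonneg (hpos p) (hpos (q+2))
    · have h1 : c (p+1) * c (q+1) * c (q+1) ≤ c p * c (q+2) * c (q+1) := by
        calc c (p+1) * c (q+1) * c (q+1) = c (p+1) * (c (q+1))^2 := by ring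
          _ ≤ c (p+1) * (c q * c (q+2)) :=
              mul_le_mul_of_nonneg_left (hlc q) (hpos (p+1))
          _ = (c (p+1) * c q) * c (q+2) := by ring
          _ ≤ (c p * c (q+1)) * c (q+2) :=
              mul_le_mul_of_nonneg_right ih (hpos (q+2))
          _ = c p * c (q+2) * c (q+1) := by ring
      exact le_of_mul_le_mul_right h1 (lt_of_le_of_ne (hpos _) (Ne.symm hz))

private lemma chain_pow {c : ℕ → ℝ} (hpos : ∀ i, 0 ≤ c i)
    (hlc : ∀ i, c (i+1)^2 ≤ c i * c (i+2)) :
    ∀ m j, 1 ≤ m → c (j+1) ^ m ≤ c j ^ (m-1) * c (j+m) := by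
  intro m
  induction m with
  | zero => omega
  | succ m ih =>
    intro j _
    rcases Nat.eq_zero_or_pos m with hm | hm
    · subst hm; simpa using le_of_eq rfl
    · calc c (j+1) ^ (m+1) = c (j+1) ^ m * c (j+1) := by ring
        _ ≤ (c j ^ (m-1) * c (j+m)) * c (j+1) :=
            mul_le_mul_of_nonneg_right (ih j hm) (hpos (j+1))
        _ = c j ^ (m-1) * (c (j+1) * c (j+m)) := by ring
        _ ≤ c j ^ (m-1) * (c j * c (j+m+1)) :=
            mul_le_mul_of_nonneg_left (ratio_step hpos hlc j (j+m) (by omega))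
              (pow_nonneg (hpos j) _)
        _ = c j ^ (m-1+1) * c (j+m+1) := by ring
        _ = c j ^ (m+1-1) * c (j+(m+1)) := by
            congr 2 <;> omega

private lemma logconvex_pow {c : ℕ → ℝ} {K : ℕ} (hpos : ∀ i, 0 ≤ c i)
    (hlc : ∀ i, c (i+1)^2 ≤ c i * c (i+2)) :
    ∀ j ≤ K, c j ^ K ≤ c 0 ^ (K - j) * c K ^ j := by
  intro j
  induction j with
  | zero => intro _; simp
  | succ j ih =>
    intro hjK
    obtain ⟨d, rfl⟩ : ∃ d, K = j + 1 + d := ⟨K - (j+1), by omega⟩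
    have hB := ih (by omega)
    have hA := chain_pow hpos hlc (d+1) j (by omega)
    -- hA : c (j+1) ^ (d+1) ≤ c j ^ d * c (j+1+d)
    have hA' : c (j+1) ^ (d+1) ≤ c j ^ d * c (j+1+d) := by
      have : j + (d+1) = j + 1 + d := by omega
      rw [this] at hA; simpa using hA
    have hKj : j + 1 + d - j = d + 1 := by omega
    have hKj1 : j + 1 + d - (j + 1) = d := by omega
    rw [hKj1]
    rw [hKj] at hB
    have key : (c (j+1) ^ (j+1+d)) ^ (d+1) ≤ (c 0 ^ d * c (j+1+d) ^ (j+1)) ^ (d+1) := by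
      calc (c (j+1) ^ (j+1+d)) ^ (d+1) = (c (j+1) ^ (d+1)) ^ (j+1+d) := by
            rw [← pow_mul, ← pow_mul, Nat.mul_comm]
        _ ≤ (c j ^ d * c (j+1+d)) ^ (j+1+d) :=
            pow_le_pow_left₀ (pow_nonneg (hpos _) _) hA' _
        _ = (c j ^ (j+1+d)) ^ d * c (j+1+d) ^ (j+1+d) := by
            rw [mul_pow, ← pow_mul, ← pow_mul, Nat.mul_comm d (j+1+d)]
        _ ≤ (c 0 ^ (d+1) * c (j+1+d) ^ j) ^ d * c (j+1+d) ^ (j+1+d) :=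
            mul_le_mul_of_nonneg_right (pow_le_pow_left₀ (pow_nonneg (hpos _) _) hB _)
              (pow_nonneg (hpos _) _)
        _ = (c 0 ^ d * c (j+1+d) ^ (j+1)) ^ (d+1) := by
            rw [mul_pow, mul_pow, ← pow_mul, ← pow_mul, ← pow_mul, ← pow_mul]
            rw [mul_assoc, ← pow_add]
            congr 1
            · ring
            · ring
    exact le_of_pow_le_pow_left₀ (by omega) (mul_nonneg (pow_nonneg (hpos _) _)
      (pow_nonneg (hpos _) _)) key
private lemma cs_int {f g : ℝ → ℝ} {L : ℝ} (hL : 0 < L) (hf : Continuous f)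
    (hg : Continuous g) :
    (∫ x in (0:ℝ)..L, |f x * g x|) ≤
      Real.sqrt ((∫ x in (0:ℝ)..L, f x ^ 2) * (∫ x in (0:ℝ)..L, g x ^ 2)) := by
  have h2 : (2:ℝ).HolderConjugate 2 := Real.HolderConjugate.two_two
  set μ' := volume.restrict (Set.Ioc (0:ℝ) L) with hμ'
  haveI : IsFiniteMeasure μ' := by
    constructor
    rw [hμ', Measure.restrict_apply_univ]
    exact (Real.volume_Ioc (a := 0) (b := L)).le.trans_lt ENNReal.ofReal_lt_top
  have hmem : ∀ (h : ℝ → ℝ), Continuous h → MemLp (fun x => |h x|) (ENNReal.ofReal 2) μ' := by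
    intro h hc
    obtain ⟨C, hC⟩ := (isCompact_Icc (a := (0:ℝ)) (b := L)).exists_bound_of_continuousOn
      hc.continuousOn
    refine MemLp.of_bound hc.abs.aestronglyMeasurable C ?_
    refine Filter.eventually_of_mem (self_mem_ae_restrict measurableSet_Ioc) ?_
    intro x hx
    simpa [abs_abs] using hC x (Set.Ioc_subset_Icc_self hx)
  have key := integral_mul_le_Lp_mul_Lq_of_nonneg (μ := μ') h2
    (f := fun x => |f x|) (g := fun x => |g x|)
    (Filter.Eventually.of_forall fun x => abs_nonneg _)
    (Filter.Eventually.of_forall fun x => abs_nonneg _)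
    (hmem f hf) (hmem g hg)
  have e1 : (∫ x in (0:ℝ)..L, |f x * g x|) = ∫ a, |f a| * |g a| ∂μ' := by
    rw [intervalIntegral.integral_of_le hL.le]
    simp_rw [abs_mul]
    rfl
  have hpt : ∀ h : ℝ → ℝ, ∀ x, |h x| ^ (2:ℝ) = h x ^ 2 := fun h x => by
    rw [show (2:ℝ) = ((2:ℕ):ℝ) by norm_num, Real.rpow_natCast, sq_abs]
  have e2 : (∫ a, |f a| ^ (2:ℝ) ∂μ') = ∫ x in (0:ℝ)..L, f x ^ 2 := by
    rw [intervalIntegral.integral_of_le hL.le]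
    simp only [hpt f]
    rfl
  have e3 : (∫ a, |g a| ^ (2:ℝ) ∂μ') = ∫ x in (0:ℝ)..L, g x ^ 2 := by
    rw [intervalIntegral.integral_of_le hL.le]
    simp only [hpt g]
    rfl
  rw [e1]
  refine key.trans (le_of_eq ?_)
  rw [e2, e3]
  have hf2 : 0 ≤ ∫ x in (0:ℝ)..L, f x ^ 2 :=
    intervalIntegral.integral_nonneg hL.le fun x _ => sq_nonneg _
  have hg2 : 0 ≤ ∫ x in (0:ℝ)..L, g x ^ 2 :=
    intervalIntegral.integral_nonneg hL.le fun x _ => sq_nonneg _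
  rw [Real.sqrt_mul hf2, Real.sqrt_eq_rpow, Real.sqrt_eq_rpow]

private lemma ibp_periodic {u v : ℝ → ℝ} {L : ℝ} (hL : 0 < L)
    (hu : Differentiable ℝ u) (hv : Differentiable ℝ v)
    (hu' : Continuous (deriv u)) (hv' : Continuous (deriv v))
    (hpu : Function.Periodic u L) (hpv : Function.Periodic v L) :
    ∫ x in (0:ℝ)..L, u x * deriv v x = - ∫ x in (0:ℝ)..L, deriv u x * v x := by
  have h := intervalIntegral.integral_mul_deriv_eq_deriv_mul
    (u := u) (v := v) (u' := deriv u) (v' := deriv v) (a := 0) (b := L)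
    (fun x _ => (hu x).hasDerivAt) (fun x _ => (hv x).hasDerivAt)
    (hu'.intervalIntegrable _ _) (hv'.intervalIntegrable _ _)
  have hb : u L * v L = u 0 * v 0 := by
    have h1 : u (0 + L) = u 0 := hpu 0
    have h2 : v (0 + L) = v 0 := hpv 0
    rw [zero_add] at h1 h2
    rw [h1, h2]
  rw [h, hb]
  ring

private lemma sup_sq_bound {ψ : ℝ → ℝ} {L : ℝ} (hL : 0 < L)
    (hdiff : Differentiable ℝ ψ) (hd : Continuous (deriv ψ))
    {x : ℝ} (hx : x ∈ Set.Icc (0:ℝ) L) :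
    ψ x ^ 2 ≤ (∫ t in (0:ℝ)..L, ψ t ^ 2) / L +
      2 * Real.sqrt ((∫ t in (0:ℝ)..L, ψ t ^ 2) * (∫ t in (0:ℝ)..L, deriv ψ t ^ 2)) := by
  have hc : Continuous ψ := hdiff.continuous
  have hcsq : Continuous fun t => ψ t ^ 2 := by continuity
  obtain ⟨x₀, hx₀mem, hmin⟩ := (isCompact_Icc (a := (0:ℝ)) (b := L)).exists_isMinOn
    (Set.nonempty_Icc.2 hL.le) hcsq.continuousOn
  -- step 1 : ψ x₀ ^ 2 ≤ (∫ ψ²)/L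
  have h1 : ψ x₀ ^ 2 * L ≤ ∫ t in (0:ℝ)..L, ψ t ^ 2 := by
    have hmono := intervalIntegral.integral_mono_on (μ := volume) hL.le
      (_root_.intervalIntegrable_const (c := ψ x₀ ^ 2))
      (hcsq.intervalIntegrable _ _)
      (fun t ht => hmin ht)
    simpa [mul_comm] using hmono
  -- step 2 : FTC
  have hder : ∀ t ∈ Set.uIcc x₀ x, HasDerivAt (fun y => ψ y ^ 2)
      (2 * ψ t * deriv ψ t) t := by
    intro t _
    have := ((hdiff t).hasDerivAt).fun_pow 2
    simpa [mul_comm, mul_assoc, mul_left_comm] using this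
  have hint : Continuous fun t => 2 * ψ t * deriv ψ t := by continuity
  have h2 : ψ x ^ 2 - ψ x₀ ^ 2 = ∫ t in x₀..x, 2 * ψ t * deriv ψ t :=
    (intervalIntegral.integral_eq_sub_of_hasDerivAt hder
      (hint.intervalIntegrable _ _)).symm
  -- step 3 : bound the FTC integral
  have habs : ∀ a b : ℝ, a ∈ Set.Icc (0:ℝ) L → b ∈ Set.Icc (0:ℝ) L →
      (∫ t in a..b, 2 * ψ t * deriv ψ t) ≤ ∫ t in (0:ℝ)..L, |2 * ψ t * deriv ψ t| := by
    intro a b ha hb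
    have hintg : IntervalIntegrable (fun t => |2 * ψ t * deriv ψ t|) volume 0 L :=
      (hint.abs.intervalIntegrable _ _)
    rcases le_total a b with hab | hab
    · calc (∫ t in a..b, 2 * ψ t * deriv ψ t)
          ≤ ∫ t in a..b, |2 * ψ t * deriv ψ t| := by
            apply intervalIntegral.integral_mono_on hab (hint.intervalIntegrable _ _)
              (hint.abs.intervalIntegrable _ _)
            intro t _; exact le_abs_self _
        _ ≤ ∫ t in (0:ℝ)..L, |2 * ψ t * deriv ψ t| :=
            intervalIntegral.integral_mono_interval ha.1 hab hb.2
              (Filter.Eventually.of_forall fun t => abs_nonneg _) hintg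
    · calc (∫ t in a..b, 2 * ψ t * deriv ψ t)
          = - ∫ t in b..a, 2 * ψ t * deriv ψ t := by
            rw [intervalIntegral.integral_symm]
        _ ≤ ∫ t in b..a, |2 * ψ t * deriv ψ t| := by
            have h := intervalIntegral.abs_integral_le_integral_abs (f := fun t => 2 * ψ t * deriv ψ t) (μ := volume) hab
            have := neg_abs_le (∫ t in b..a, 2 * ψ t * deriv ψ t)
            linarith [abs_nonneg (∫ t in b..a, 2 * ψ t * deriv ψ t)]
        _ ≤ ∫ t in (0:ℝ)..L, |2 * ψ t * deriv ψ t| :=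
            intervalIntegral.integral_mono_interval hb.1 hab ha.2
              (Filter.Eventually.of_forall fun t => abs_nonneg _) hintg
  have h3 : (∫ t in (0:ℝ)..L, |2 * ψ t * deriv ψ t|) ≤
      2 * Real.sqrt ((∫ t in (0:ℝ)..L, ψ t ^ 2) * (∫ t in (0:ℝ)..L, deriv ψ t ^ 2)) := by
    have : ∀ t : ℝ, |2 * ψ t * deriv ψ t| = 2 * |ψ t * deriv ψ t| := by
      intro t; rw [mul_assoc, abs_mul]; simp
    simp only [this]
    rw [intervalIntegral.integral_const_mul]
    have := cs_int hL hc hd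
    linarith
  have h4 : ψ x₀ ^ 2 ≤ (∫ t in (0:ℝ)..L, ψ t ^ 2) / L := by
    rw [le_div_iff₀ hL]; exact h1
  have h5 := habs x₀ x hx₀mem hx
  linarith [h2, h3, h4, h5]

private lemma rpow_helper {a b l : ℝ} (ha : 0 < a) (hb : 0 < b) (hl : 0 < l)
    {K i : ℕ} (hK : 1 ≤ K) (hiK : i ≤ K) :
    (a ^ (K - i) * (b / l ^ (2*K)) ^ i) ^ ((K:ℝ)⁻¹) =
      a ^ (1 - (i:ℝ)/(K:ℝ)) * b ^ ((i:ℝ)/(K:ℝ)) * l ^ (-(2*(i:ℝ))) := by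
  have hKne : (K:ℝ) ≠ 0 := Nat.cast_ne_zero.mpr (by omega)
  have hlpow : (0:ℝ) < l ^ (2*K) := pow_pos hl _
  have hX : (0:ℝ) < a ^ (K - i) * (b / l ^ (2*K)) ^ i :=
    mul_pos (pow_pos ha _) (pow_pos (div_pos hb hlpow) _)
  have hY : (0:ℝ) < a ^ (1 - (i:ℝ)/(K:ℝ)) * b ^ ((i:ℝ)/(K:ℝ)) * l ^ (-(2*(i:ℝ))) :=
    mul_pos (mul_pos (Real.rpow_pos_of_pos ha _) (Real.rpow_pos_of_pos hb _))
      (Real.rpow_pos_of_pos hl _)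
  apply Real.log_injOn_pos (Set.mem_Ioi.mpr (Real.rpow_pos_of_pos hX _))
    (Set.mem_Ioi.mpr hY)
  rw [Real.log_rpow hX]
  rw [Real.log_mul (ne_of_gt (pow_pos ha _)) (ne_of_gt (pow_pos (div_pos hb hlpow) _))]
  rw [Real.log_pow, Real.log_pow, Real.log_div (ne_of_gt hb) (ne_of_gt hlpow), Real.log_pow]
  rw [Real.log_mul (ne_of_gt (mul_pos (Real.rpow_pos_of_pos ha _) (Real.rpow_pos_of_pos hb _)))
    (ne_of_gt (Real.rpow_pos_of_pos hl _))]
  rw [Real.log_mul (ne_of_gt (Real.rpow_pos_of_pos ha _)) (ne_of_gt (Real.rpow_pos_of_pos hb _))]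
  rw [Real.log_rpow ha, Real.log_rpow hb, Real.log_rpow hl]
  rw [Nat.cast_sub hiK]
  push_cast
  field_simp
  ring

private lemma sqrt_three_le : Real.sqrt 3 ≤ 3 := by
  nlinarith [Real.sq_sqrt (by norm_num : (0:ℝ) ≤ 3), Real.sqrt_nonneg 3]

set_option maxHeartbeats 1600000 in
/-- **First estimate of Appendix Lemma A.5** (after Dziuk–Kuwert–Schätzle).
For `K ≥ 1`, `ν ≥ 2` there is `c = c(K,μ,ν) > 0` such that for every smooth
`L`-periodic `φ` and nonnegative integers `i₁,…,i_ν` with `i₁+⋯+i_ν = μ` and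
`i_j ≤ K−1`, with `η = (μ + ν/2 − 1)/K`:
`∫₀^L |φ^{(i₁)}⋯φ^{(i_ν)}| ≤ c L^{1−μ−ν} (L ∫₀^L φ²)^{(ν−η)/2}
  (L^{2K+1} ∫₀^L (φ^{(K)})² + L ∫₀^L φ²)^{η/2}`. -/
theorem dks_product_estimate' :
    ∀ K μ ν : ℕ, 1 ≤ K → 2 ≤ ν → ∃ c : ℝ, 0 < c ∧
      ∀ (φ : ℝ → ℝ) (L : ℝ) (ι : Fin ν → ℕ),
        ContDiff ℝ (⊤ : ℕ∞) φ → Function.Periodic φ L → 0 < L →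
        (∑ j, ι j) = μ → (∀ j, ι j ≤ K - 1) →
        (∫ x in (0:ℝ)..L, |∏ j, iteratedDeriv (ι j) φ x|) ≤
          c * L ^ ((1 : ℝ) - μ - ν) *
            (L * ∫ x in (0:ℝ)..L, (φ x) ^ 2) ^
              (((ν : ℝ) - ((μ : ℝ) + (ν : ℝ) / 2 - 1) / K) / 2) *
            (L ^ (2 * K + 1) * (∫ x in (0:ℝ)..L, (iteratedDeriv K φ x) ^ 2) +
                L * ∫ x in (0:ℝ)..L, (φ x) ^ 2) ^
              ((((μ : ℝ) + (ν : ℝ) / 2 - 1) / K) / 2) := by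
  intro K μ ν hK hν
  obtain ⟨n, rfl⟩ : ∃ n, ν = n + 2 := ⟨ν - 2, by omega⟩
  refine ⟨(3:ℝ) ^ n, by positivity, ?_⟩
  intro φ L ι hφ hper hL hsum hle
  have hc : ∀ i, Continuous (iteratedDeriv i φ) := fun i => (smooth_iter hφ i).continuous
  have hdiff : ∀ i, Differentiable ℝ (iteratedDeriv i φ) := fun i =>
    (smooth_iter hφ i).differentiable (by simp)
  have hder : ∀ i, deriv (iteratedDeriv i φ) = iteratedDeriv (i+1) φ := fun i =>
    (iteratedDeriv_succ).symm
  have hperf : ∀ i, Function.Periodic (iteratedDeriv i φ) L := fun i => periodic_iter hper i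
  set A : ℕ → ℝ := fun i => ∫ x in (0:ℝ)..L, iteratedDeriv i φ x ^ 2 with hAdef
  have hAnn : ∀ i, 0 ≤ A i := fun i =>
    intervalIntegral.integral_nonneg hL.le fun x _ => sq_nonneg _
  -- log-convexity of i ↦ A i
  have hlc : ∀ i, A (i+1) ^ 2 ≤ A i * A (i+2) := by
    intro i
    have hibp : (∫ x in (0:ℝ)..L, iteratedDeriv i φ x * deriv (iteratedDeriv (i+1) φ) x)
        = - ∫ x in (0:ℝ)..L, deriv (iteratedDeriv i φ) x * iteratedDeriv (i+1) φ x :=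
      ibp_periodic hL (hdiff i) (hdiff (i+1))
        (by rw [hder]; exact hc (i+1)) (by rw [hder]; exact hc (i+2))
        (hperf i) (hperf (i+1))
    rw [hder i, hder (i+1)] at hibp
    have hval : A (i+1) = - ∫ x in (0:ℝ)..L, iteratedDeriv i φ x * iteratedDeriv (i+2) φ x := by
      rw [hibp]
      simp only [hAdef, neg_neg]
      refine intervalIntegral.integral_congr fun x _ => by ring
    have hb : A (i+1) ≤ Real.sqrt (A i * A (i+2)) := by
      rw [hval]
      refine le_trans ?_ (cs_int hL (hc i) (hc (i+2)))
      exact (neg_le_abs _).trans (intervalIntegral.abs_integral_le_integral_abs hL.le)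
    calc A (i+1) ^ 2 ≤ Real.sqrt (A i * A (i+2)) ^ 2 :=
          pow_le_pow_left₀ (hAnn _) hb 2
      _ = A i * A (i+2) := Real.sq_sqrt (mul_nonneg (hAnn i) (hAnn _))
  have interp : ∀ j ≤ K, A j ^ K ≤ A 0 ^ (K - j) * A K ^ j := logconvex_pow hAnn hlc
  -- pointwise sup bound
  set D : ℕ → ℝ := fun i => A i / L + 2 * Real.sqrt (A i * A (i+1)) with hDdef
  have hDnn : ∀ i, 0 ≤ D i := by
    intro i
    have h1 := hAnn i
    have h2 := Real.sqrt_nonneg (A i * A (i+1))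
    have := hL
    positivity
  have habsf : ∀ i, ∀ x ∈ Set.Icc (0:ℝ) L, |iteratedDeriv i φ x| ≤ Real.sqrt (D i) := by
    intro i x hx
    have h := sup_sq_bound hL (hdiff i) (by rw [hder]; exact hc (i+1)) hx
    rw [hder i] at h
    calc |iteratedDeriv i φ x| = Real.sqrt (iteratedDeriv i φ x ^ 2) :=
          (Real.sqrt_sq_eq_abs _).symm
      _ ≤ Real.sqrt (D i) := Real.sqrt_le_sqrt h
  -- the two key reductions
  have key1 : (∫ x in (0:ℝ)..L, |∏ j, iteratedDeriv (ι j) φ x|) ≤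
      (∏ j : Fin n, Real.sqrt (D (ι j.succ.succ))) *
        ∫ x in (0:ℝ)..L, |iteratedDeriv (ι 0) φ x * iteratedDeriv (ι 1) φ x| := by
    rw [← intervalIntegral.integral_const_mul]
    refine intervalIntegral.integral_mono_on hL.le
      (((continuous_finset_prod _ (fun j _ => hc (ι j))).abs).intervalIntegrable _ _)
      ((continuous_const.mul (((hc (ι 0)).mul (hc (ι 1))).abs)).intervalIntegrable _ _) ?_
    intro x hx
    have e : |∏ j : Fin (n+2), iteratedDeriv (ι j) φ x| =
        |iteratedDeriv (ι 0) φ x * iteratedDeriv (ι 1) φ x| *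
          ∏ j : Fin n, |iteratedDeriv (ι j.succ.succ) φ x| := by
      rw [Fin.prod_univ_succ, Fin.prod_univ_succ, Fin.succ_zero_eq_one]
      simp only [abs_mul, Finset.abs_prod]
      ring
    rw [e]
    have hb : (∏ j : Fin n, |iteratedDeriv (ι j.succ.succ) φ x|) ≤
        ∏ j : Fin n, Real.sqrt (D (ι j.succ.succ)) :=
      Finset.prod_le_prod (fun j _ => abs_nonneg _) (fun j _ => habsf _ x hx)
    calc |iteratedDeriv (ι 0) φ x * iteratedDeriv (ι 1) φ x| *
          ∏ j : Fin n, |iteratedDeriv (ι j.succ.succ) φ x|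
        ≤ |iteratedDeriv (ι 0) φ x * iteratedDeriv (ι 1) φ x| *
          ∏ j : Fin n, Real.sqrt (D (ι j.succ.succ)) :=
          mul_le_mul_of_nonneg_left hb (abs_nonneg _)
      _ = (∏ j : Fin n, Real.sqrt (D (ι j.succ.succ))) *
          |iteratedDeriv (ι 0) φ x * iteratedDeriv (ι 1) φ x| := mul_comm _ _
  have key2 : (∫ x in (0:ℝ)..L, |iteratedDeriv (ι 0) φ x * iteratedDeriv (ι 1) φ x|) ≤
      Real.sqrt (A (ι 0) * A (ι 1)) := cs_int hL (hc _) (hc _)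
  have key : (∫ x in (0:ℝ)..L, |∏ j, iteratedDeriv (ι j) φ x|) ≤
      (∏ j : Fin n, Real.sqrt (D (ι j.succ.succ))) * Real.sqrt (A (ι 0) * A (ι 1)) :=
    key1.trans (mul_le_mul_of_nonneg_left key2
      (Finset.prod_nonneg fun j _ => Real.sqrt_nonneg _))
  -- rewrite the goal in terms of A
  have hA0g : (∫ x in (0:ℝ)..L, (φ x) ^ 2) = A 0 := by
    rw [hAdef]; simp [iteratedDeriv_zero]
  have hAKg : (∫ x in (0:ℝ)..L, (iteratedDeriv K φ x) ^ 2) = A K := by rw [hAdef]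
  rw [hA0g, hAKg]
  by_cases hA0 : A 0 = 0
  · -- degenerate case : φ ≡ 0 in L²
    have h0 : A (ι 0) = 0 := by
      have hι0K : ι 0 < K := by have := hle 0; omega
      have h1 := interp (ι 0) hι0K.le
      rw [hA0, zero_pow (by omega : K - ι 0 ≠ 0), zero_mul] at h1
      have h4 : A (ι 0) ^ K = 0 := le_antisymm h1 (pow_nonneg (hAnn (ι 0)) K)
      exact pow_eq_zero_iff (by omega : K ≠ 0) |>.mp h4
    rw [h0, zero_mul, Real.sqrt_zero, mul_zero] at key
    refine key.trans ?_
    have r0 : (0:ℝ) ≤ L * A 0 := mul_nonneg hL.le (hAnn 0)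
    have rK : (0:ℝ) ≤ L ^ (2*K+1) * A K + L * A 0 := by
      have h1 := hAnn K; have h2 := hAnn 0
      positivity
    exact mul_nonneg (mul_nonneg (mul_nonneg (by positivity)
      (Real.rpow_nonneg hL.le _)) (Real.rpow_nonneg r0 _)) (Real.rpow_nonneg rK _)
  · -- main case
    have ha2 : 0 < A 0 := lt_of_le_of_ne (hAnn 0) (Ne.symm hA0)
    have hKne : ((K:ℝ)) ≠ 0 := Nat.cast_ne_zero.mpr (by omega)
    have hKpos : (0:ℝ) < (K:ℝ) := by exact_mod_cast Nat.lt_of_lt_of_le Nat.zero_lt_one hK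
    set N2 : ℝ := L ^ (2*K) * A K + A 0 with hN2def
    have hN2 : 0 < N2 := by
      have h1 := hAnn K
      rw [hN2def]; positivity
    have ha2N2 : A 0 ≤ N2 := by
      have h1 : 0 ≤ L ^ (2*K) * A K := mul_nonneg (pow_nonneg hL.le _) (hAnn K)
      rw [hN2def]; linarith
    set F : ℝ → ℝ → ℝ → ℝ := fun p q r => A 0 ^ p * N2 ^ q * L ^ r with hFdef
    have hFpos : ∀ p q r, 0 < F p q r := fun p q r =>
      mul_pos (mul_pos (Real.rpow_pos_of_pos ha2 _) (Real.rpow_pos_of_pos hN2 _))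
        (Real.rpow_pos_of_pos hL _)
    have hFmul : ∀ p q r p' q' r', F p q r * F p' q' r' = F (p+p') (q+q') (r+r') := by
      intro p q r p' q' r'
      simp only [hFdef]
      rw [Real.rpow_add ha2, Real.rpow_add hN2, Real.rpow_add hL]
      ring
    have hFsqrt : ∀ p q r, Real.sqrt (F p q r) = F (p/2) (q/2) (r/2) := by
      intro p q r
      simp only [hFdef]
      rw [Real.sqrt_eq_rpow]
      rw [Real.mul_rpow (by positivity) (by positivity),
          Real.mul_rpow (by positivity) (by positivity)]
      rw [← Real.rpow_mul ha2.le, ← Real.rpow_mul hN2.le, ← Real.rpow_mul hL.le]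
      rw [mul_one_div, mul_one_div, mul_one_div]
    have hFmono : ∀ p q r δ, 0 ≤ δ → F (p+δ) q r ≤ F p (q+δ) r := by
      intro p q r δ hδ
      simp only [hFdef]
      rw [Real.rpow_add ha2, Real.rpow_add hN2]
      have h3 : A 0 ^ δ ≤ N2 ^ δ := Real.rpow_le_rpow ha2.le ha2N2 hδ
      have h4 : A 0 ^ p * A 0 ^ δ ≤ A 0 ^ p * N2 ^ δ :=
        mul_le_mul_of_nonneg_left h3 (Real.rpow_nonneg ha2.le p)
      calc A 0 ^ p * A 0 ^ δ * N2 ^ q * L ^ r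
          ≤ A 0 ^ p * N2 ^ δ * N2 ^ q * L ^ r :=
            mul_le_mul_of_nonneg_right (mul_le_mul_of_nonneg_right h4
              (Real.rpow_nonneg hN2.le q)) (Real.rpow_nonneg hL.le r)
        _ = A 0 ^ p * (N2 ^ q * N2 ^ δ) * L ^ r := by ring
    have hAK' : A K ≤ N2 / L ^ (2*K) := by
      rw [le_div_iff₀ (pow_pos hL _)]
      have h1 := ha2.le
      rw [hN2def]; nlinarith [pow_pos hL (2*K), hAnn K]
    have hA_le : ∀ i, i ≤ K → A i ≤ F (1 - (i:ℝ)/(K:ℝ)) ((i:ℝ)/(K:ℝ)) (-(2*(i:ℝ))) := by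
      intro i hiK
      have h1 : A i ^ K ≤ A 0 ^ (K-i) * (N2 / L^(2*K)) ^ i :=
        (interp i hiK).trans (mul_le_mul_of_nonneg_left
          (pow_le_pow_left₀ (hAnn K) hAK' i) (pow_nonneg (hAnn 0) _))
      have h2 : A i = (A i ^ K) ^ ((K:ℝ)⁻¹) := by
        rw [← Real.rpow_natCast (A i) K, ← Real.rpow_mul (hAnn i),
          mul_inv_cancel₀ hKne, Real.rpow_one]
      calc A i = (A i ^ K) ^ ((K:ℝ)⁻¹) := h2
        _ ≤ (A 0 ^ (K-i) * (N2 / L^(2*K)) ^ i) ^ ((K:ℝ)⁻¹) :=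
            Real.rpow_le_rpow (pow_nonneg (hAnn i) K) h1 (inv_nonneg.mpr hKpos.le)
        _ = F (1 - (i:ℝ)/(K:ℝ)) ((i:ℝ)/(K:ℝ)) (-(2*(i:ℝ))) := by
            rw [rpow_helper ha2 hN2 hL hK hiK, hFdef]
    have hD_le : ∀ i, i + 1 ≤ K →
        Real.sqrt (D i) ≤ Real.sqrt 3 *
          F ((1 - ((i:ℝ)+1/2)/(K:ℝ))/2) ((((i:ℝ)+1/2)/(K:ℝ))/2) (-((i:ℝ)+1/2)) := by
      intro i hiK
      have hDb : D i ≤ 3 * F (1 - ((i:ℝ)+1/2)/(K:ℝ)) (((i:ℝ)+1/2)/(K:ℝ)) (-(2*(i:ℝ)+1)) := by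
        have t1 : A i / L ≤ F (1 - ((i:ℝ)+1/2)/(K:ℝ)) (((i:ℝ)+1/2)/(K:ℝ)) (-(2*(i:ℝ)+1)) := by
          have h1 : A i / L ≤ F (1 - (i:ℝ)/(K:ℝ)) ((i:ℝ)/(K:ℝ)) (-(2*(i:ℝ))) / L :=
            (div_le_div_iff_of_pos_right hL).mpr (hA_le i (by omega))
          have h2 : F (1 - (i:ℝ)/(K:ℝ)) ((i:ℝ)/(K:ℝ)) (-(2*(i:ℝ))) / L
              = F (1 - (i:ℝ)/(K:ℝ)) ((i:ℝ)/(K:ℝ)) (-(2*(i:ℝ)) + (-1)) := by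
            simp only [hFdef]
            rw [Real.rpow_add hL, Real.rpow_neg_one]
            field_simp
          have h3 : F (1 - (i:ℝ)/(K:ℝ)) ((i:ℝ)/(K:ℝ)) (-(2*(i:ℝ)) + (-1)) ≤
              F (1 - ((i:ℝ)+1/2)/(K:ℝ)) (((i:ℝ)+1/2)/(K:ℝ)) (-(2*(i:ℝ)) + (-1)) := by
            have heq1 : 1 - (i:ℝ)/(K:ℝ) = (1 - ((i:ℝ)+1/2)/(K:ℝ)) + 1/(2*(K:ℝ)) := by
              field_simp; ring
            have heq2 : ((i:ℝ)+1/2)/(K:ℝ) = (i:ℝ)/(K:ℝ) + 1/(2*(K:ℝ)) := by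
              field_simp
            rw [heq1, heq2]
            exact hFmono _ _ _ _ (by positivity)
          have heq3 : (-(2*(i:ℝ)) + (-1)) = -(2*(i:ℝ)+1) := by ring
          rw [heq3] at h3
          rw [h2] at h1
          rw [heq3] at h1
          exact h1.trans h3
        have t2 : Real.sqrt (A i * A (i+1)) ≤
            F (1 - ((i:ℝ)+1/2)/(K:ℝ)) (((i:ℝ)+1/2)/(K:ℝ)) (-(2*(i:ℝ)+1)) := by
          have hb1 := hA_le i (by omega)
          have hb2 := hA_le (i+1) hiK
          push_cast at hb2
          have h1 : A i * A (i+1) ≤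
              F (1 - (i:ℝ)/(K:ℝ)) ((i:ℝ)/(K:ℝ)) (-(2*(i:ℝ))) *
              F (1 - ((i:ℝ)+1)/(K:ℝ)) (((i:ℝ)+1)/(K:ℝ)) (-(2*((i:ℝ)+1))) :=
            mul_le_mul hb1 hb2 (hAnn _) (hFpos _ _ _).le
          have h2 : F (1 - (i:ℝ)/(K:ℝ)) ((i:ℝ)/(K:ℝ)) (-(2*(i:ℝ))) *
              F (1 - ((i:ℝ)+1)/(K:ℝ)) (((i:ℝ)+1)/(K:ℝ)) (-(2*((i:ℝ)+1)))
              = F (2*(1 - ((i:ℝ)+1/2)/(K:ℝ))) (2*(((i:ℝ)+1/2)/(K:ℝ))) (2*(-(2*(i:ℝ)+1))) := by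
            rw [hFmul]
            rw [show (1 - (i:ℝ)/(K:ℝ)) + (1 - ((i:ℝ)+1)/(K:ℝ))
                = 2*(1 - ((i:ℝ)+1/2)/(K:ℝ)) by ring]
            rw [show ((i:ℝ)/(K:ℝ)) + (((i:ℝ)+1)/(K:ℝ)) = 2*(((i:ℝ)+1/2)/(K:ℝ)) by ring]
            rw [show (-(2*(i:ℝ))) + (-(2*((i:ℝ)+1))) = 2*(-(2*(i:ℝ)+1)) by ring]
          calc Real.sqrt (A i * A (i+1))
              ≤ Real.sqrt (F (2*(1 - ((i:ℝ)+1/2)/(K:ℝ))) (2*(((i:ℝ)+1/2)/(K:ℝ)))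
                  (2*(-(2*(i:ℝ)+1)))) := by
                rw [← h2]; exact Real.sqrt_le_sqrt h1
            _ = F (1 - ((i:ℝ)+1/2)/(K:ℝ)) (((i:ℝ)+1/2)/(K:ℝ)) (-(2*(i:ℝ)+1)) := by
                rw [hFsqrt]
                rw [show 2*(1 - ((i:ℝ)+1/2)/(K:ℝ))/2 = 1 - ((i:ℝ)+1/2)/(K:ℝ) by ring]
                rw [show 2*(((i:ℝ)+1/2)/(K:ℝ))/2 = ((i:ℝ)+1/2)/(K:ℝ) by ring]
                rw [show 2*(-(2*(i:ℝ)+1))/2 = -(2*(i:ℝ)+1) by ring]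
        have hDle : D i ≤ F (1 - ((i:ℝ)+1/2)/(K:ℝ)) (((i:ℝ)+1/2)/(K:ℝ)) (-(2*(i:ℝ)+1)) +
            2 * F (1 - ((i:ℝ)+1/2)/(K:ℝ)) (((i:ℝ)+1/2)/(K:ℝ)) (-(2*(i:ℝ)+1)) := by
          simp only [hDdef]
          have := Real.sqrt_nonneg (A i * A (i+1))
          linarith
        linarith
      calc Real.sqrt (D i)
          ≤ Real.sqrt (3 * F (1 - ((i:ℝ)+1/2)/(K:ℝ)) (((i:ℝ)+1/2)/(K:ℝ)) (-(2*(i:ℝ)+1))) :=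
            Real.sqrt_le_sqrt hDb
        _ = Real.sqrt 3 * Real.sqrt (F (1 - ((i:ℝ)+1/2)/(K:ℝ)) (((i:ℝ)+1/2)/(K:ℝ))
              (-(2*(i:ℝ)+1))) := Real.sqrt_mul (by norm_num) _
        _ = Real.sqrt 3 * F ((1 - ((i:ℝ)+1/2)/(K:ℝ))/2) ((((i:ℝ)+1/2)/(K:ℝ))/2)
              (-((i:ℝ)+1/2)) := by
            rw [hFsqrt]
            rw [show (-(2*(i:ℝ)+1))/2 = -((i:ℝ)+1/2) by ring]
    -- cast of the sum hypothesis
    have hscast : (ι 0:ℝ) + (ι 1:ℝ) + (∑ j : Fin n, (ι j.succ.succ :ℝ)) = (μ:ℝ) := by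
      rw [Fin.sum_univ_succ, Fin.sum_univ_succ, Fin.succ_zero_eq_one] at hsum
      have hcast := congrArg (Nat.cast : ℕ → ℝ) hsum
      push_cast at hcast
      linarith
    set S : ℝ := ∑ j : Fin n, (ι j.succ.succ : ℝ) with hSdef
    have hS : S = (μ:ℝ) - (ι 0:ℝ) - (ι 1:ℝ) := by linarith
    have prodF : ∀ (s : Finset (Fin n)) (p q r : Fin n → ℝ),
        (∏ j ∈ s, F (p j) (q j) (r j)) = F (∑ j ∈ s, p j) (∑ j ∈ s, q j) (∑ j ∈ s, r j) := by
      intro s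
      induction s using Finset.cons_induction with
      | empty => intro p q r; simp [hFdef]
      | cons a s ha ih =>
        intro p q r
        rw [Finset.prod_cons, Finset.sum_cons, Finset.sum_cons, Finset.sum_cons, ih, hFmul]
    have haff : ∀ (α β : ℝ), (∑ j : Fin n, (α + β * (ι j.succ.succ : ℝ))) = n * α + β * S := by
      intro α β
      rw [Finset.sum_add_distrib, Finset.sum_const, Finset.card_univ, Fintype.card_fin,
        ← Finset.mul_sum, ← hSdef, nsmul_eq_mul]
    have hsP : (∑ j : Fin n, (1 - ((ι j.succ.succ:ℝ)+1/2)/(K:ℝ))/2)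
        = n * (1/2 - 1/(4*(K:ℝ))) + (-(1/(2*(K:ℝ)))) * S := by
      rw [← haff]
      refine Finset.sum_congr rfl fun j _ => ?_
      field_simp
      ring
    have hsQ : (∑ j : Fin n, (((ι j.succ.succ:ℝ)+1/2)/(K:ℝ))/2)
        = n * (1/(4*(K:ℝ))) + (1/(2*(K:ℝ))) * S := by
      rw [← haff]
      refine Finset.sum_congr rfl fun j _ => ?_
      field_simp
      ring
    have hsR : (∑ j : Fin n, -((ι j.succ.succ:ℝ)+1/2))
        = n * (-(1/2)) + (-1) * S := by
      rw [← haff]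
      refine Finset.sum_congr rfl fun j _ => ?_
      ring
    have hprodD : (∏ j : Fin n, Real.sqrt (D (ι j.succ.succ))) ≤
        Real.sqrt 3 ^ n * F (∑ j : Fin n, (1 - ((ι j.succ.succ:ℝ)+1/2)/(K:ℝ))/2)
          (∑ j : Fin n, (((ι j.succ.succ:ℝ)+1/2)/(K:ℝ))/2)
          (∑ j : Fin n, -((ι j.succ.succ:ℝ)+1/2)) := by
      calc (∏ j : Fin n, Real.sqrt (D (ι j.succ.succ)))
          ≤ ∏ j : Fin n, (Real.sqrt 3 *
              F ((1 - ((ι j.succ.succ:ℝ)+1/2)/(K:ℝ))/2) ((((ι j.succ.succ:ℝ)+1/2)/(K:ℝ))/2)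
                (-((ι j.succ.succ:ℝ)+1/2))) :=
            Finset.prod_le_prod (fun j _ => Real.sqrt_nonneg _)
              (fun j _ => hD_le (ι j.succ.succ) (by have := hle j.succ.succ; omega))
        _ = Real.sqrt 3 ^ n * F (∑ j : Fin n, (1 - ((ι j.succ.succ:ℝ)+1/2)/(K:ℝ))/2)
              (∑ j : Fin n, (((ι j.succ.succ:ℝ)+1/2)/(K:ℝ))/2)
              (∑ j : Fin n, -((ι j.succ.succ:ℝ)+1/2)) := by
            rw [Finset.prod_mul_distrib, Finset.prod_const, Finset.card_univ,
              Fintype.card_fin, prodF]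
    have hsqrtA01 : Real.sqrt (A (ι 0) * A (ι 1)) ≤
        F (((1-(ι 0:ℝ)/(K:ℝ)) + (1-(ι 1:ℝ)/(K:ℝ)))/2) (((ι 0:ℝ)/(K:ℝ) + (ι 1:ℝ)/(K:ℝ))/2)
          ((-(2*(ι 0:ℝ)) + -(2*(ι 1:ℝ)))/2) := by
      have h1 : A (ι 0) * A (ι 1) ≤
          F (1-(ι 0:ℝ)/(K:ℝ)) ((ι 0:ℝ)/(K:ℝ)) (-(2*(ι 0:ℝ))) *
          F (1-(ι 1:ℝ)/(K:ℝ)) ((ι 1:ℝ)/(K:ℝ)) (-(2*(ι 1:ℝ))) :=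
        mul_le_mul (hA_le (ι 0) (by have := hle 0; omega))
          (hA_le (ι 1) (by have := hle 1; omega)) (hAnn _) (hFpos _ _ _).le
      calc Real.sqrt (A (ι 0) * A (ι 1))
          ≤ Real.sqrt (F (1-(ι 0:ℝ)/(K:ℝ)) ((ι 0:ℝ)/(K:ℝ)) (-(2*(ι 0:ℝ))) *
              F (1-(ι 1:ℝ)/(K:ℝ)) ((ι 1:ℝ)/(K:ℝ)) (-(2*(ι 1:ℝ)))) := Real.sqrt_le_sqrt h1
        _ = F (((1-(ι 0:ℝ)/(K:ℝ)) + (1-(ι 1:ℝ)/(K:ℝ)))/2) (((ι 0:ℝ)/(K:ℝ) + (ι 1:ℝ)/(K:ℝ))/2)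
              ((-(2*(ι 0:ℝ)) + -(2*(ι 1:ℝ)))/2) := by rw [hFmul, hFsqrt]
    have total : (∫ x in (0:ℝ)..L, |∏ j, iteratedDeriv (ι j) φ x|) ≤
        Real.sqrt 3 ^ n *
          F ((n * (1/2 - 1/(4*(K:ℝ))) + (-(1/(2*(K:ℝ)))) * S) +
              ((1-(ι 0:ℝ)/(K:ℝ)) + (1-(ι 1:ℝ)/(K:ℝ)))/2)
            ((n * (1/(4*(K:ℝ))) + (1/(2*(K:ℝ))) * S) + ((ι 0:ℝ)/(K:ℝ) + (ι 1:ℝ)/(K:ℝ))/2)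
            ((n * (-(1/2)) + (-1) * S) + ((-(2*(ι 0:ℝ)) + -(2*(ι 1:ℝ)))/2)) := by
      rw [hsP, hsQ, hsR] at hprodD
      refine key.trans ?_
      calc (∏ j : Fin n, Real.sqrt (D (ι j.succ.succ))) * Real.sqrt (A (ι 0) * A (ι 1))
          ≤ (Real.sqrt 3 ^ n *
              F (n * (1/2 - 1/(4*(K:ℝ))) + (-(1/(2*(K:ℝ)))) * S)
                (n * (1/(4*(K:ℝ))) + (1/(2*(K:ℝ))) * S) (n * (-(1/2)) + (-1) * S)) *
            (F (((1-(ι 0:ℝ)/(K:ℝ)) + (1-(ι 1:ℝ)/(K:ℝ)))/2)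
              (((ι 0:ℝ)/(K:ℝ) + (ι 1:ℝ)/(K:ℝ))/2) ((-(2*(ι 0:ℝ)) + -(2*(ι 1:ℝ)))/2)) :=
            mul_le_mul hprodD hsqrtA01 (Real.sqrt_nonneg _)
              (mul_nonneg (pow_nonneg (Real.sqrt_nonneg 3) n) (hFpos _ _ _).le)
        _ = _ := by rw [mul_assoc, hFmul]
    refine total.trans ?_
    have hbase : L ^ (2*K+1) * A K + L * A 0 = L * N2 := by
      rw [hN2def, pow_succ]; ring
    rw [hbase]
    rw [Real.mul_rpow hL.le (hAnn 0), Real.mul_rpow hL.le hN2.le]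
    have hco : Real.sqrt 3 ^ n ≤ (3:ℝ) ^ n :=
      pow_le_pow_left₀ (Real.sqrt_nonneg 3) sqrt_three_le n
    calc Real.sqrt 3 ^ n *
          F ((n * (1/2 - 1/(4*(K:ℝ))) + (-(1/(2*(K:ℝ)))) * S) +
              ((1-(ι 0:ℝ)/(K:ℝ)) + (1-(ι 1:ℝ)/(K:ℝ)))/2)
            ((n * (1/(4*(K:ℝ))) + (1/(2*(K:ℝ))) * S) + ((ι 0:ℝ)/(K:ℝ) + (ι 1:ℝ)/(K:ℝ))/2)
            ((n * (-(1/2)) + (-1) * S) + ((-(2*(ι 0:ℝ)) + -(2*(ι 1:ℝ)))/2))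
        ≤ (3:ℝ) ^ n *
          F ((n * (1/2 - 1/(4*(K:ℝ))) + (-(1/(2*(K:ℝ)))) * S) +
              ((1-(ι 0:ℝ)/(K:ℝ)) + (1-(ι 1:ℝ)/(K:ℝ)))/2)
            ((n * (1/(4*(K:ℝ))) + (1/(2*(K:ℝ))) * S) + ((ι 0:ℝ)/(K:ℝ) + (ι 1:ℝ)/(K:ℝ))/2)
            ((n * (-(1/2)) + (-1) * S) + ((-(2*(ι 0:ℝ)) + -(2*(ι 1:ℝ)))/2)) :=
          mul_le_mul_of_nonneg_right hco (hFpos _ _ _).le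
      _ = (3:ℝ) ^ n * L ^ ((1:ℝ) - (μ:ℝ) - ((n+2 : ℕ):ℝ)) *
          (L ^ ((((n+2:ℕ):ℝ) - ((μ:ℝ) + ((n+2:ℕ):ℝ)/2 - 1)/(K:ℝ))/2) *
            A 0 ^ ((((n+2:ℕ):ℝ) - ((μ:ℝ) + ((n+2:ℕ):ℝ)/2 - 1)/(K:ℝ))/2)) *
          (L ^ ((((μ:ℝ) + ((n+2:ℕ):ℝ)/2 - 1)/(K:ℝ))/2) *
            N2 ^ ((((μ:ℝ) + ((n+2:ℕ):ℝ)/2 - 1)/(K:ℝ))/2)) := by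
          have hP : (n * (1/2 - 1/(4*(K:ℝ))) + (-(1/(2*(K:ℝ)))) * S) +
              ((1-(ι 0:ℝ)/(K:ℝ)) + (1-(ι 1:ℝ)/(K:ℝ)))/2
              = (((n+2:ℕ):ℝ) - ((μ:ℝ) + ((n+2:ℕ):ℝ)/2 - 1)/(K:ℝ))/2 := by
            rw [hS]
            push_cast
            field_simp
            ring
          have hQ : (n * (1/(4*(K:ℝ))) + (1/(2*(K:ℝ))) * S) +
              ((ι 0:ℝ)/(K:ℝ) + (ι 1:ℝ)/(K:ℝ))/2
              = (((μ:ℝ) + ((n+2:ℕ):ℝ)/2 - 1)/(K:ℝ))/2 := by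
            rw [hS]
            push_cast
            field_simp
            ring
          have hR : (n * (-(1/2)) + (-1) * S) + ((-(2*(ι 0:ℝ)) + -(2*(ι 1:ℝ)))/2)
              = ((1:ℝ) - (μ:ℝ) - ((n+2 : ℕ):ℝ)) +
                (((n+2:ℕ):ℝ) - ((μ:ℝ) + ((n+2:ℕ):ℝ)/2 - 1)/(K:ℝ))/2 +
                (((μ:ℝ) + ((n+2:ℕ):ℝ)/2 - 1)/(K:ℝ))/2 := by
            rw [hS]
            push_cast
            field_simp
            ring
          rw [hP, hQ, hR]
          simp only [hFdef]
          rw [Real.rpow_add hL, Real.rpow_add hL]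
          ring
end
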